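/- In A_n(X) with n odd and n > 1, for all a,b ∈ X one has E·V(a,b)·e_1 = W(a,b)·O, where O = e_1 e_3 ⋯ e_{n−2} and E = e_2 e_4 ⋯ e_{n−1}. -/
import Mathlib


/-- The ascending product `e j * e (j+1) * ⋯ * e k` (empty if `k + 1 ≤ j`). -/
def ascProd {A : Type*} [Ring A] (e : ℕ → A) (j k : ℕ) : A :=
  ((List.range (k + 1 - j)).map (fun i => e (j + i))).prod

/-- The descending product `e k * e (k-1) * ⋯ * e j` (empty if `k + 1 ≤ j`). -/
def descProd {A : Type*} [Ring A] (e : ℕ → A) (j k : ℕ) : A :=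
  ((List.range (k + 1 - j)).map (fun i => e (k - i))).prod

/-- For `n` odd, `O = e 1 * e 3 * ⋯ * e (n-2)` (equal to `1` when `n = 1`). -/
def Oprod {A : Type*} [Ring A] (e : ℕ → A) (n : ℕ) : A :=
  ((List.range ((n - 1) / 2)).map (fun i => e (2 * i + 1))).prod

/-- For `n` odd, `E = e 2 * e 4 * ⋯ * e (n-1)` (equal to `1` when `n = 1`). -/
def Eprod {A : Type*} [Ring A] (e : ℕ → A) (n : ℕ) : A :=
  ((List.range ((n - 1) / 2)).map (fun i => e (2 * i + 2))).prod

/-- For `n` even, `Θ = e 1 * e 3 * ⋯ * e (n-1)`. -/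
def ThetaProd {A : Type*} [Ring A] (e : ℕ → A) (n : ℕ) : A :=
  ((List.range (n / 2)).map (fun i => e (2 * i + 1))).prod

/-- For `n` even, `Ω = e 2 * e 4 * ⋯ * e (n-2)` (equal to `1` when `n = 2`). -/
def OmegaProd {A : Type*} [Ring A] (e : ℕ → A) (n : ℕ) : A :=
  ((List.range (n / 2 - 1)).map (fun i => e (2 * i + 2))).prod

/-- The defining relations (L1)–(L38) of the algebraic label algebra `A_n(X)`,
with TL generators `e i` (`1 ≤ i ≤ n - 1`), label generators `F a b`, `G a b`
(even) and `W a b`, `V a b` (odd), and parameters `β`, `α a b`, `δ a b`, `γ a b`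
in a commutative base ring `R`. -/
structure LabelAlgebraRel (R : Type*) [CommRing R] (A : Type*) [Ring A] [Algebra R A]
    (X : Type*) (n : ℕ) (e : ℕ → A) (F G W V : X → X → A)
    (β : R) (α δ γ : X → X → R) : Prop where
  L1 : ∀ i j, 1 ≤ i → i ≤ n - 1 → 1 ≤ j → j ≤ n - 1 → (i + 2 ≤ j ∨ j + 2 ≤ i) →
    e i * e j = e j * e i
  L2 : ∀ (a b : X) (j : ℕ), 2 ≤ j → j ≤ n - 1 → F a b * e j = e j * F a b
  L3 : ∀ (a b : X) (j : ℕ), 1 ≤ j → j ≤ n - 2 → G a b * e j = e j * G a b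
  L4 : ∀ (a b c d : X), 2 ≤ n → F a b * G c d = G c d * F a b
  L5 : ∀ i j, 1 ≤ i → i ≤ n - 1 → 1 ≤ j → j ≤ n - 1 → (i = j + 1 ∨ j = i + 1) →
    e i * e j * e i = e i
  L6 : ∀ (a b : X) (j : ℕ), 2 ≤ j → j ≤ n - 1 → e j * W a b = W a b * e (j - 1)
  L7 : ∀ (a b : X) (j : ℕ), 1 ≤ j → j ≤ n - 2 → e j * V a b = V a b * e (j + 1)
  L8 : ∀ (a b c d : X), 2 ≤ n → G a b * W c d = W c a * e (n - 1) * G b d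
  L9 : ∀ (a b c d : X), 2 ≤ n → F a b * V c d = V a d * e 1 * F b c
  L10 : ∀ (a b c d : X), 2 ≤ n → W a b * F c d = F a c * e 1 * W d b
  L11 : ∀ (a b c d : X), 2 ≤ n → V a b * G c d = G b c * e (n - 1) * V a d
  L12 : ∀ (a b : X), 2 ≤ n → e 1 * W a b = ascProd e 1 (n - 1) * V a b
  L13 : ∀ (a b : X), 2 ≤ n → W a b * e (n - 1) = V a b * ascProd e 1 (n - 1)
  L14 : ∀ (a b : X), 2 ≤ n → e (n - 1) * V a b = descProd e 1 (n - 1) * W a b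
  L15 : ∀ (a b : X), 2 ≤ n → V a b * e 1 = W a b * descProd e 1 (n - 1)
  L16 : ∀ (a b c d : X), W a b * W c d = F a c * ascProd e 1 (n - 1) * G b d
  L17 : ∀ (a b c d : X), V a b * V c d = G b d * descProd e 1 (n - 1) * F a c
  L18 : ∀ (a b c d : X), 2 ≤ n → V a b * e 1 * W c d = F a c * G b d
  L19 : ∀ j, 1 ≤ j → j ≤ n - 1 → e j * e j = β • e j
  L20 : ∀ (a b c d : X), F c a * F b d = α a b • F c d
  L21 : ∀ (a b : X), 2 ≤ n → e 1 * F a b * e 1 = α a b • e 1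
  L22 : ∀ (a b c d : X), F c a * W b d = α a b • W c d
  L23 : ∀ (a b c d : X), V a d * F b c = α a b • V c d
  L24 : ∀ (a b c d : X), V a c * W b d = α a b • G c d
  L25 : ∀ (a b c d : X), G c a * G b d = δ a b • G c d
  L26 : ∀ (a b : X), 2 ≤ n → e (n - 1) * G a b * e (n - 1) = δ a b • e (n - 1)
  L27 : ∀ (a b c d : X), G c a * V d b = δ a b • V d c
  L28 : ∀ (a b c d : X), W c a * G b d = δ a b • W c d
  L29 : ∀ (a b c d : X), W c a * V d b = δ a b • F c d
  L30 : Odd n → ∀ (a b c d : X),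
    W c b * Oprod e n * W a d * Oprod e n = γ a b • (W c d * Oprod e n)
  L31 : Odd n → ∀ (a b c d : X),
    F c a * Eprod e n * V d b * Eprod e n = γ a b • (F c d * Eprod e n)
  L32 : Odd n → ∀ (a b c d : X),
    V a d * Eprod e n * V c b * Eprod e n = γ a b • (V c d * Eprod e n)
  L33 : Odd n → ∀ (a b c d : X),
    G c b * Oprod e n * W a d * Oprod e n = γ a b • (G c d * Oprod e n)
  L34 : Even n → ∀ (a b : X),
    ThetaProd e n * W a b * ThetaProd e n = γ a b • ThetaProd e n
  L35 : n = 1 → ∀ (a b c d : X), F c a * G b d = γ a b • W c d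
  L36 : n = 1 → ∀ (a b c d : X), G d b * F a c = γ a b • V c d
  L37 : n = 1 → ∀ (a b c d : X), W c b * F a d = γ a b • F c d
  L38 : n = 1 → ∀ (a b c d : X), V a c * G b d = γ a b • G c d

private lemma descProd_one_succ {A : Type*} [Ring A] (e : ℕ → A) (K : ℕ) :
    descProd e 1 (K + 1) = e (K + 1) * descProd e 1 K := by
  show ((List.range (K + 1)).map (fun i => e (K + 1 - i))).prod
      = e (K + 1) * ((List.range K).map (fun i => e (K - i))).prod
  rw [List.range_succ_eq_map]
  simp only [List.map_cons, List.prod_cons, List.map_map, Nat.add_sub_cancel]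
  congr 1
  congr 1
  apply List.map_congr_left
  intro i _
  simp [Nat.succ_sub_succ]

theorem stmt {R : Type*} [CommRing R] {A : Type*} [Ring A] [Algebra R A] {X : Type*}
    (n : ℕ) (e : ℕ → A) (F G W V : X → X → A) (β : R) (α δ γ : X → X → R)
    (hrel : LabelAlgebraRel R A X n e F G W V β α δ γ)
    (hodd : Odd n) (hn : 1 < n) (a b : X) :
    Eprod e n * V a b * e 1 = W a b * Oprod e n := by
  obtain ⟨m, hm⟩ := hodd
  have hn2 : 2 ≤ n := hn
  have hm1 : 1 ≤ m := by omega
  set Ok : ℕ → A := fun k => ((List.range k).map (fun i => e (2 * i + 1))).prod with hOk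
  set Ek : ℕ → A := fun k => ((List.range k).map (fun i => e (2 * i + 2))).prod with hEk
  have hOkS : ∀ k, Ok (k + 1) = Ok k * e (2 * k + 1) := by
    intro k; simp [hOk, List.range_succ]
  have hEkS : ∀ k, Ek (k + 1) = Ek k * e (2 * k + 2) := by
    intro k; simp [hEk, List.range_succ]
  have hcomm : ∀ k, 2 * k ≤ n - 1 → ∀ j, 2 * k + 1 ≤ j → j ≤ n - 1 →
      e j * Ok k = Ok k * e j := by
    intro k
    induction k with
    | zero => intro _ j _ _; simp [hOk]
    | succ k ih =>
      intro hk j hj1 hj2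
      rw [hOkS, ← mul_assoc, ih (by omega) j (by omega) hj2, mul_assoc,
        hrel.L1 j (2 * k + 1) (by omega) hj2 (by omega) (by omega) (Or.inr (by omega)),
        mul_assoc]
  have hEW : ∀ k, 2 * k ≤ n - 1 → Ek k * W a b = W a b * Ok k := by
    intro k
    induction k with
    | zero => intro _; simp [hOk, hEk]
    | succ k ih =>
      intro hk
      have h21 : 2 * k + 2 - 1 = 2 * k + 1 := rfl
      rw [hEkS, hOkS, mul_assoc, hrel.L6 a b (2 * k + 2) (by omega) (by omega), h21,
        ← mul_assoc, ih (by omega), mul_assoc]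
  have hOD : ∀ k, 2 * k ≤ n - 1 → Ok k * descProd e 1 (2 * k) = Ok k := by
    intro k
    induction k with
    | zero =>
      intro _
      have : descProd e 1 0 = 1 := by simp [descProd]
      simp [hOk, this]
    | succ k ih =>
      intro hk
      have h2 : 2 * (k + 1) = (2 * k + 1) + 1 := by ring
      rw [h2, descProd_one_succ, descProd_one_succ, hOkS]
      calc Ok k * e (2 * k + 1) * (e (2 * k + 1 + 1) * (e (2 * k + 1) * descProd e 1 (2 * k)))
          = Ok k * (e (2 * k + 1) * e (2 * k + 2) * e (2 * k + 1)) * descProd e 1 (2 * k) := by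
            simp [mul_assoc]
        _ = Ok k * e (2 * k + 1) * descProd e 1 (2 * k) := by
            rw [hrel.L5 (2 * k + 1) (2 * k + 2) (by omega) (by omega) (by omega) (by omega)
              (Or.inr rfl)]
        _ = e (2 * k + 1) * (Ok k * descProd e 1 (2 * k)) := by
            rw [← hcomm k (by omega) (2 * k + 1) (by omega) (by omega), mul_assoc]
        _ = e (2 * k + 1) * Ok k := by rw [ih (by omega)]
        _ = Ok k * e (2 * k + 1) := hcomm k (by omega) (2 * k + 1) (by omega) (by omega)
  have hmn : (n - 1) / 2 = m := by omega
  have hE : Eprod e n = Ek m := by rw [Eprod, hmn]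
  have hO : Oprod e n = Ok m := by rw [Oprod, hmn]
  have hD : n - 1 = 2 * m := by omega
  calc Eprod e n * V a b * e 1
      = Ek m * (W a b * descProd e 1 (2 * m)) := by
        rw [hE, mul_assoc, hrel.L15 a b hn2, hD]
    _ = Ek m * W a b * descProd e 1 (2 * m) := by rw [mul_assoc]
    _ = W a b * Ok m * descProd e 1 (2 * m) := by rw [hEW m (by omega)]
    _ = W a b * (Ok m * descProd e 1 (2 * m)) := by rw [mul_assoc]
    _ = W a b * Ok m := by rw [hOD m (by omega)]
    _ = W a b * Oprod e n := by rw [hO]
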